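/- Suppose φ : ℝ → ℝ is a C² function with ∫ φ² = 1, φ and φ' vanishing at ±∞, with φ' square-integrable, satisfying φ''(x) = (m² − E²)φ(x) + 2Ev f(x)φ(x) − v² f(x)² φ(x) for all x, where |E| < m. Then 2E⟨f⟩ < v⟨f²⟩ fails to hold in general, but the weaker identity −∫(φ')² + E² − m² = 2Ev⟨f⟩ − v²⟨f²⟩ holds, and consequently 2Ev⟨f⟩ − v²⟨f²⟩ < 0, i.e. 2E⟨f⟩ < v⟨f²⟩ when v > 0. -/

import Mathlib

open Real Filter MeasureTheory intervalIntegral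

/-!
Multiplying the equation by `φ` and integrating over `ℝ`, integration by parts (the boundary term
`φ φ'` vanishes at `±∞`) turns `∫ φ φ''` into `-∫ (φ')²`, while the right-hand side integrates to
`m² - E² + 2Ev⟨f⟩ - v²⟨f²⟩` because `∫ φ² = 1`. This is the identity; since `∫ (φ')² ≥ 0` and
`E² < m²`, its left-hand side is negative, and dividing by `v > 0` gives the last inequality.
-/

theorem integral_mul_deriv_deriv_eq_neg_integral_deriv_sq {φ : ℝ → ℝ}
    (hφ : Differentiable ℝ φ) (hφ' : Differentiable ℝ (deriv φ))
    (hφ_top : Tendsto φ atTop (nhds 0)) (hφ_bot : Tendsto φ atBot (nhds 0))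
    (hφ'_top : Tendsto (deriv φ) atTop (nhds 0)) (hφ'_bot : Tendsto (deriv φ) atBot (nhds 0))
    (h_sq : Integrable fun x => deriv φ x ^ 2)
    (h_mul : Integrable fun x => φ x * deriv (deriv φ) x) :
    ∫ x, φ x * deriv (deriv φ) x = -∫ x, deriv φ x ^ 2 := by
  have h := integral_mul_deriv_eq_deriv_mul (u := φ) (v := deriv φ) (a' := 0) (b' := 0)
    (fun x _ => (hφ x).hasDerivAt) (fun x _ => (hφ' x).hasDerivAt) h_mul
    (h_sq.congr (.of_forall fun x => sq _)) (by simpa [Pi.mul_def] using hφ_bot.mul hφ'_bot)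
    (by simpa [Pi.mul_def] using hφ_top.mul hφ'_top)
  simpa only [sq, sub_zero, zero_sub] using h

def IsKleinGordonSolution (m E v : ℝ) (f φ : ℝ → ℝ) : Prop :=
  ∀ x, deriv (deriv φ) x
    = (m ^ 2 - E ^ 2) * φ x + 2 * E * v * f x * φ x - v ^ 2 * f x ^ 2 * φ x

namespace IsKleinGordonSolution

variable {m E v : ℝ} {f φ : ℝ → ℝ}

theorem mul_deriv_deriv_eq (hsol : IsKleinGordonSolution m E v f φ) :
    (fun x => φ x * deriv (deriv φ) x) = fun x => (m ^ 2 - E ^ 2) * φ x ^ 2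
      + 2 * E * v * (f x * φ x ^ 2) - v ^ 2 * (f x ^ 2 * φ x ^ 2) := by
  funext x
  rw [hsol x]
  ring

theorem integrable_mul_deriv_deriv (hsol : IsKleinGordonSolution m E v f φ)
    (hφ : Integrable fun x => φ x ^ 2) (hf : Integrable fun x => f x * φ x ^ 2)
    (hf_sq : Integrable fun x => f x ^ 2 * φ x ^ 2) :
    Integrable fun x => φ x * deriv (deriv φ) x :=
  hsol.mul_deriv_deriv_eq ▸ ((hφ.const_mul _).fun_add (hf.const_mul _)).sub (hf_sq.const_mul _)

theorem integral_mul_deriv_deriv (hsol : IsKleinGordonSolution m E v f φ)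
    (hφ : Integrable fun x => φ x ^ 2) (hf : Integrable fun x => f x * φ x ^ 2)
    (hf_sq : Integrable fun x => f x ^ 2 * φ x ^ 2) :
    ∫ x, φ x * deriv (deriv φ) x = (m ^ 2 - E ^ 2) * (∫ x, φ x ^ 2)
      + 2 * E * v * (∫ x, f x * φ x ^ 2) - v ^ 2 * (∫ x, f x ^ 2 * φ x ^ 2) := by
  rw [hsol.mul_deriv_deriv_eq, integral_sub ((hφ.const_mul _).fun_add (hf.const_mul _))
    (hf_sq.const_mul _), integral_add (hφ.const_mul _) (hf.const_mul _),
    MeasureTheory.integral_const_mul, MeasureTheory.integral_const_mul,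
    MeasureTheory.integral_const_mul]

end IsKleinGordonSolution

theorem stmt3_general (m E v : ℝ) (f φ : ℝ → ℝ)
    (hE : |E| < m) (hv : 0 < v)
    (hφ : ContDiff ℝ 2 φ)
    (hnorm : ∫ x : ℝ, (φ x) ^ 2 = 1)
    (hφ0 : Tendsto φ atTop (nhds 0)) (hφ0' : Tendsto φ atBot (nhds 0))
    (hdφ0 : Tendsto (deriv φ) atTop (nhds 0))
    (hdφ0' : Tendsto (deriv φ) atBot (nhds 0))
    (hint1 : Integrable (fun x => (deriv φ x) ^ 2))
    (hint2 : Integrable (fun x => f x * (φ x) ^ 2))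
    (hint3 : Integrable (fun x => (f x) ^ 2 * (φ x) ^ 2))
    (hsol : ∀ x, deriv (deriv φ) x
      = (m ^ 2 - E ^ 2) * φ x + 2 * E * v * f x * φ x - v ^ 2 * (f x) ^ 2 * φ x) :
    (-(∫ x : ℝ, (deriv φ x) ^ 2) + E ^ 2 - m ^ 2
        = 2 * E * v * (∫ x : ℝ, f x * (φ x) ^ 2)
          - v ^ 2 * (∫ x : ℝ, (f x) ^ 2 * (φ x) ^ 2)) ∧
    (2 * E * v * (∫ x : ℝ, f x * (φ x) ^ 2)
        - v ^ 2 * (∫ x : ℝ, (f x) ^ 2 * (φ x) ^ 2) < 0) ∧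
    (2 * E * (∫ x : ℝ, f x * (φ x) ^ 2) < v * (∫ x : ℝ, (f x) ^ 2 * (φ x) ^ 2)) := by
  have hφ_sq : Integrable fun x => φ x ^ 2 := .of_integral_ne_zero (by simp [hnorm])
  have h_parts := integral_mul_deriv_deriv_eq_neg_integral_deriv_sq
    (hφ.differentiable (by norm_num)) ((hφ.iterate_deriv' 1 1).differentiable (by norm_num))
    hφ0 hφ0' hdφ0 hdφ0' hint1
    (IsKleinGordonSolution.integrable_mul_deriv_deriv hsol hφ_sq hint2 hint3)
  rw [IsKleinGordonSolution.integral_mul_deriv_deriv hsol hφ_sq hint2 hint3, hnorm] at h_parts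
  have h_identity : -(∫ x, deriv φ x ^ 2) + E ^ 2 - m ^ 2
      = 2 * E * v * (∫ x, f x * φ x ^ 2) - v ^ 2 * (∫ x, f x ^ 2 * φ x ^ 2) := by
    linarith
  have hEm : E ^ 2 < m ^ 2 := sq_lt_sq.mpr (hE.trans_le (le_abs_self m))
  have h_neg : 2 * E * v * (∫ x, f x * φ x ^ 2) - v ^ 2 * (∫ x, f x ^ 2 * φ x ^ 2) < 0 := by
    have h_energy : 0 ≤ ∫ x, deriv φ x ^ 2 := integral_nonneg fun x => sq_nonneg _
    linarith
  refine ⟨h_identity, h_neg, lt_of_mul_lt_mul_left ?_ hv.le⟩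
  linarith

/-- For a normalized `C²` solution of the expanded Klein–Gordon equation,
with `φ` and `φ'` vanishing at `±∞` and `φ'` square-integrable, the identity
`−∫ (φ')² + E² − m² = 2Ev⟨f⟩ − v²⟨f²⟩` holds, and consequently
`2Ev⟨f⟩ − v²⟨f²⟩ < 0`, i.e. `2E⟨f⟩ < v⟨f²⟩` since `v > 0`. -/
theorem stmt3 (m E v : ℝ) (f φ : ℝ → ℝ)
    (hm : 0 < m) (hE : |E| < m) (hv : 0 < v)
    (hφ : ContDiff ℝ 2 φ)
    (hnorm : ∫ x : ℝ, (φ x) ^ 2 = 1)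
    (hφ0 : Tendsto φ atTop (nhds 0)) (hφ0' : Tendsto φ atBot (nhds 0))
    (hdφ0 : Tendsto (deriv φ) atTop (nhds 0))
    (hdφ0' : Tendsto (deriv φ) atBot (nhds 0))
    (hint1 : Integrable (fun x => (deriv φ x) ^ 2))
    (hint2 : Integrable (fun x => f x * (φ x) ^ 2))
    (hint3 : Integrable (fun x => (f x) ^ 2 * (φ x) ^ 2))
    (hsol : ∀ x, deriv (deriv φ) x
      = (m ^ 2 - E ^ 2) * φ x + 2 * E * v * f x * φ x - v ^ 2 * (f x) ^ 2 * φ x) :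
    (-(∫ x : ℝ, (deriv φ x) ^ 2) + E ^ 2 - m ^ 2
        = 2 * E * v * (∫ x : ℝ, f x * (φ x) ^ 2)
          - v ^ 2 * (∫ x : ℝ, (f x) ^ 2 * (φ x) ^ 2)) ∧
    (2 * E * v * (∫ x : ℝ, f x * (φ x) ^ 2)
        - v ^ 2 * (∫ x : ℝ, (f x) ^ 2 * (φ x) ^ 2) < 0) ∧
    (2 * E * (∫ x : ℝ, f x * (φ x) ^ 2) < v * (∫ x : ℝ, (f x) ^ 2 * (φ x) ^ 2)) :=
  stmt3_general m E v f φ hE hv hφ hnorm hφ0 hφ0' hdφ0 hdφ0' hint1 hint2 hint3 hsol
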